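/- Let ν be a finite Borel measure on ℝ with compact support not containing 0, φ a Schwartz function with φ(y) = 1/y for all y ∈ supp(ν), and g as defined by g(x) = (1+x)^{−1/2} + sup{|ν̂(tx)| : |t| ≥ 1}. Then |(φν)^(x)| ≲ g(|x|/2) for all x ∈ ℝ. -/

import Mathlib

/-! By Fourier inversion, `(φν)^ = φ̂ ∗ ν̂`, and `|φ̂(u)| ≲ (1 + |u|)⁻²` since `φ̂` is Schwartz.
Split the convolution integral at `|u| = |x|/2`. Where `|u| ≥ |x|/2`, one factor
`(1 + |u|)^(-1/2) ≤ (1 + |x|/2)^(-1/2)` is taken from the decay of `φ̂` and `|ν̂| ≤ ν(ℝ)`; where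
`|u| < |x|/2`, we have `|x - u| ≥ |x|/2`, so `|ν̂(x - u)| ≤ sup_{|t| ≥ 1} |ν̂(t |x|/2)|`. In both
cases the remaining factor `(1 + |u|)^(-3/2)` is integrable. -/

open MeasureTheory

/-- Fourier transform of a measure on `ℝ`. -/
noncomputable def ft1 (μ : Measure ℝ) (ξ : ℝ) : ℂ :=
  ∫ x, Complex.exp (((-2 * Real.pi * x * ξ : ℝ) : ℂ) * Complex.I) ∂μ

/-- The auxiliary majorant `g(x) = (1+x)^{-1/2} + sup{|ν̂(tx)| : |t| ≥ 1}`. -/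
noncomputable def gfun (ν : Measure ℝ) (x : ℝ) : ℝ :=
  (1 + x) ^ (-(1 / 2 : ℝ)) + sSup {r : ℝ | ∃ t : ℝ, 1 ≤ |t| ∧ r = ‖ft1 ν (t * x)‖}

/-- Fourier transform of the measure with density `φ` with respect to `ν`. -/
noncomputable def ftDens (φ : ℝ → ℂ) (ν : Measure ℝ) (ξ : ℝ) : ℂ :=
  ∫ y, φ y * Complex.exp (((-2 * Real.pi * y * ξ : ℝ) : ℂ) * Complex.I) ∂ν

open FourierTransform

theorem SchwartzMap.exists_norm_le_mul_one_add_norm_rpow_neg {E F : Type*}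
    [NormedAddCommGroup E] [NormedSpace ℝ E] [NormedAddCommGroup F] [NormedSpace ℝ F]
    (f : SchwartzMap E F) (k : ℕ) :
    ∃ C : ℝ, 0 < C ∧ ∀ x, ‖f x‖ ≤ C * (1 + ‖x‖) ^ (-(k : ℝ)) := by
  set s := (Finset.Iic (k, 0)).sup (fun m => SchwartzMap.seminorm ℝ m.1 m.2 (E := E) (F := F)) f
  refine ⟨2 ^ k * s + 1, by positivity, fun x => ?_⟩
  have hdecay := one_add_le_sup_seminorm_apply (𝕜 := ℝ) (m := (k, 0)) le_rfl le_rfl f x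
  rw [norm_iteratedFDeriv_zero] at hdecay
  have hx : 0 < 1 + ‖x‖ := by positivity
  rw [Real.rpow_neg hx.le, Real.rpow_natCast, ← div_eq_mul_inv, le_div_iff₀ (by positivity),
    mul_comm]
  linarith [mul_nonneg (norm_nonneg (f x)) (pow_nonneg hx.le k)]

section FourierMeasure

variable (ν : Measure ℝ) [IsFiniteMeasure ν]

theorem norm_ft1_le (ξ : ℝ) : ‖ft1 ν ξ‖ ≤ ν.real Set.univ := by
  simpa [ft1] using norm_integral_le_of_norm_le_const (μ := ν) (C := 1)
    (f := fun x : ℝ => Complex.exp (((-2 * Real.pi * x * ξ : ℝ) : ℂ) * Complex.I))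
    (by filter_upwards with x; rw [Complex.norm_exp_ofReal_mul_I])

theorem bddAbove_norm_ft1 (c : ℝ) :
    BddAbove {r : ℝ | ∃ t : ℝ, 1 ≤ |t| ∧ r = ‖ft1 ν (t * c)‖} := by
  refine ⟨ν.real Set.univ, fun r hr => ?_⟩
  obtain ⟨t, -, rfl⟩ := hr
  exact norm_ft1_le ν _

theorem norm_ft1_le_sSup {c y : ℝ} (hc : 0 ≤ c) (hy : c ≤ |y|) :
    ‖ft1 ν y‖ ≤ sSup {r : ℝ | ∃ t : ℝ, 1 ≤ |t| ∧ r = ‖ft1 ν (t * c)‖} := by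
  have hmem : ‖ft1 ν (1 * c)‖ ∈ {r : ℝ | ∃ t : ℝ, 1 ≤ |t| ∧ r = ‖ft1 ν (t * c)‖} :=
    ⟨1, by simp, rfl⟩
  rcases hc.eq_or_lt with rfl | hc
  · -- at `c = 0` every `t` gives `ft1 ν 0 = ν(ℝ)`, the trivial bound
    calc ‖ft1 ν y‖ ≤ ν.real Set.univ := norm_ft1_le ν y
      _ = ‖ft1 ν (1 * 0)‖ := by simp [ft1, abs_of_nonneg measureReal_nonneg]
      _ ≤ _ := le_csSup (bddAbove_norm_ft1 ν 0) hmem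
  · refine le_csSup (bddAbove_norm_ft1 ν c) ⟨y / c, ?_, by rw [div_mul_cancel₀ _ hc.ne']⟩
    rwa [abs_div, abs_of_pos hc, le_div_iff₀ hc, one_mul]

theorem sSup_norm_ft1_nonneg {c : ℝ} (hc : 0 ≤ c) :
    0 ≤ sSup {r : ℝ | ∃ t : ℝ, 1 ≤ |t| ∧ r = ‖ft1 ν (t * c)‖} :=
  (norm_nonneg _).trans (norm_ft1_le_sSup ν hc (le_abs_self c))

end FourierMeasure

theorem SchwartzMap.eq_integral_exp_mul_fourier (φ : SchwartzMap ℝ ℂ) (t : ℝ) :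
    φ t = ∫ u : ℝ, Complex.exp (((2 * Real.pi * t * u : ℝ) : ℂ) * Complex.I) * 𝓕 (⇑φ) u := by
  conv_lhs => rw [← φ.continuous.fourierInv_fourier_eq φ.integrable (𝓕 φ).integrable]
  rw [Real.fourierInv_eq']
  congr 1 with u
  rw [smul_eq_mul, RCLike.inner_apply, conj_trivial]
  ring_nf

theorem ftDens_eq_integral_fourier_mul_ft1 (ν : Measure ℝ) [IsFiniteMeasure ν]
    (φ : SchwartzMap ℝ ℂ) (x : ℝ) :
    ftDens (fun y => φ y) ν x = ∫ u : ℝ, 𝓕 (⇑φ) u * ft1 ν (x - u) := by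
  set e : ℝ → ℝ → ℂ := fun t ξ => Complex.exp (((-2 * Real.pi * t * ξ : ℝ) : ℂ) * Complex.I)
  have hinv : ∀ t, φ t * e t x = ∫ u : ℝ, 𝓕 (⇑φ) u * e t (x - u) := fun t => by
    rw [φ.eq_integral_exp_mul_fourier t, ← integral_mul_const]
    congr 1 with u
    rw [mul_comm (Complex.exp _), mul_assoc, ← Complex.exp_add]
    simp only [e]
    push_cast
    ring_nf
  have hint : Integrable (fun p : ℝ × ℝ => 𝓕 (⇑φ) p.2 * e p.1 (x - p.2)) (ν.prod volume) := by
    refine ((integrable_const (1 : ℝ)).mul_prod (𝓕 φ).integrable.norm).mono' ?_ ?_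
    · have hψ : Continuous (𝓕 ⇑φ) := (𝓕 φ).continuous
      exact Continuous.aestronglyMeasurable (by simp only [e]; fun_prop)
    · filter_upwards with p
      rw [norm_mul, Complex.norm_exp_ofReal_mul_I, mul_one, one_mul]
      rfl
  simp only [ftDens, ft1]
  simp_rw [← integral_const_mul]
  rw [← integral_integral_swap hint]
  exact integral_congr_ae (ae_of_all _ hinv)

section DecayBound

variable {ψ h : ℝ → ℂ} {C M S x : ℝ}

theorem norm_mul_le_of_decay (hC : 0 ≤ C) (hψ : ∀ u, ‖ψ u‖ ≤ C * (1 + ‖u‖) ^ (-(2 : ℝ)))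
    (hM : ∀ y, ‖h y‖ ≤ M) (hS : ∀ y, |x| / 2 ≤ |y| → ‖h y‖ ≤ S) (u : ℝ) :
    ‖ψ u * h (x - u)‖ ≤
      C * (M * (1 + |x| / 2) ^ (-(1 / 2 : ℝ)) + S) * (1 + ‖u‖) ^ (-(3 / 2 : ℝ)) := by
  have hM0 : 0 ≤ M := (norm_nonneg _).trans (hM 0)
  have hS0 : 0 ≤ S := (norm_nonneg _).trans (hS x (by linarith [abs_nonneg x]))
  have hu1 : 0 < 1 + ‖u‖ := by positivity
  rw [norm_mul]
  rcases le_or_gt (|x| / 2) ‖u‖ with hu | hu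
  · have hψu : ‖ψ u‖ ≤ C * ((1 + |x| / 2) ^ (-(1 / 2 : ℝ)) * (1 + ‖u‖) ^ (-(3 / 2 : ℝ))) := by
      calc ‖ψ u‖ ≤ C * (1 + ‖u‖) ^ (-(2 : ℝ)) := hψ u
        _ = C * ((1 + ‖u‖) ^ (-(1 / 2 : ℝ)) * (1 + ‖u‖) ^ (-(3 / 2 : ℝ))) := by
          rw [← Real.rpow_add hu1]; norm_num
        _ ≤ _ := by
          have := Real.rpow_le_rpow_of_nonpos (x := 1 + |x| / 2) (y := 1 + ‖u‖) (by positivity)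
            (by linarith) (by norm_num : -(1 / 2 : ℝ) ≤ 0)
          gcongr
    calc ‖ψ u‖ * ‖h (x - u)‖
        ≤ C * ((1 + |x| / 2) ^ (-(1 / 2 : ℝ)) * (1 + ‖u‖) ^ (-(3 / 2 : ℝ))) * M :=
          mul_le_mul hψu (hM _) (norm_nonneg _) (by positivity)
      _ = C * (M * (1 + |x| / 2) ^ (-(1 / 2 : ℝ))) * (1 + ‖u‖) ^ (-(3 / 2 : ℝ)) := by ring
      _ ≤ _ := by gcongr; exact le_add_of_nonneg_right hS0
  · have hxu : |x| / 2 ≤ |x - u| := by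
      rw [Real.norm_eq_abs] at hu
      linarith [abs_sub_abs_le_abs_sub x u]
    have hψu : ‖ψ u‖ ≤ C * (1 + ‖u‖) ^ (-(3 / 2 : ℝ)) := by
      refine (hψ u).trans ?_
      gcongr
      · linarith [norm_nonneg u]
      · norm_num
    calc ‖ψ u‖ * ‖h (x - u)‖ ≤ C * (1 + ‖u‖) ^ (-(3 / 2 : ℝ)) * S :=
          mul_le_mul hψu (hS _ hxu) (norm_nonneg _) (by positivity)
      _ = C * S * (1 + ‖u‖) ^ (-(3 / 2 : ℝ)) := by ring
      _ ≤ _ := by gcongr; exact le_add_of_nonneg_left (by positivity)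

theorem norm_integral_mul_le_of_decay (hC : 0 ≤ C)
    (hψ : ∀ u, ‖ψ u‖ ≤ C * (1 + ‖u‖) ^ (-(2 : ℝ)))
    (hM : ∀ y, ‖h y‖ ≤ M) (hS : ∀ y, |x| / 2 ≤ |y| → ‖h y‖ ≤ S) :
    ‖∫ u, ψ u * h (x - u)‖ ≤
      C * (M * (1 + |x| / 2) ^ (-(1 / 2 : ℝ)) + S) * ∫ u : ℝ, (1 + ‖u‖) ^ (-(3 / 2 : ℝ)) := by
  rw [← integral_const_mul]
  refine norm_integral_le_of_norm_le ((integrable_one_add_norm ?_).const_mul _)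
    (ae_of_all _ (norm_mul_le_of_decay hC hψ hM hS))
  norm_num

end DecayBound

theorem stmt14_general (ν : Measure ℝ) [IsFiniteMeasure ν]
    (φ : SchwartzMap ℝ ℂ) :
    ∃ C : ℝ, 0 < C ∧ ∀ x : ℝ, ‖ftDens (fun y => φ y) ν x‖ ≤ C * gfun ν (|x| / 2) := by
  obtain ⟨A, hA, hdecay⟩ := (𝓕 φ).exists_norm_le_mul_one_add_norm_rpow_neg 2
  set I := ∫ u : ℝ, (1 + ‖u‖) ^ (-(3 / 2 : ℝ))
  have hI : 0 ≤ I := integral_nonneg fun u => by positivity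
  set M := ν.real Set.univ
  refine ⟨A * I * (M + 1) + 1, by positivity, fun x => ?_⟩
  set a := (1 + |x| / 2) ^ (-(1 / 2 : ℝ))
  set S := sSup {r : ℝ | ∃ t : ℝ, 1 ≤ |t| ∧ r = ‖ft1 ν (t * (|x| / 2))‖}
  have hS : 0 ≤ S := sSup_norm_ft1_nonneg ν (by positivity)
  have hmain : ‖ftDens (fun y => φ y) ν x‖ ≤ A * (M * a + S) * I := by
    rw [ftDens_eq_integral_fourier_mul_ft1]
    exact norm_integral_mul_le_of_decay hA.le (by exact_mod_cast hdecay) (norm_ft1_le ν)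
      fun y hy => norm_ft1_le_sSup ν (by positivity) hy
  have hg : gfun ν (|x| / 2) = a + S := rfl
  calc _ ≤ A * (M * a + S) * I := hmain
    _ = A * I * (M * a + S) := by ring
    _ ≤ A * I * ((M + 1) * (a + S)) := by
      gcongr
      nlinarith [show 0 ≤ a by positivity, show 0 ≤ M from measureReal_nonneg]
    _ = A * I * (M + 1) * gfun ν (|x| / 2) := by rw [hg]; ring
    _ ≤ _ := by
      have hg0 : 0 ≤ gfun ν (|x| / 2) := hg ▸ add_nonneg (by positivity) hS
      exact mul_le_mul_of_nonneg_right (le_add_of_nonneg_right zero_le_one) hg0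

theorem stmt14 (ν : Measure ℝ) (hν0 : ν ≠ 0) [IsFiniteMeasure ν]
    (K : Set ℝ) (hKc : IsCompact K) (hK0 : (0 : ℝ) ∉ K) (hνK : ν Kᶜ = 0)
    (φ : SchwartzMap ℝ ℂ) (hφ : ∀ y ∈ K, φ y = 1 / (y : ℂ)) :
    ∃ C : ℝ, 0 < C ∧ ∀ x : ℝ, ‖ftDens (fun y => φ y) ν x‖ ≤ C * gfun ν (|x| / 2) :=
  stmt14_general ν φ
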